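/- Volterra sewing lemma. Let E be a Banach space, T > 0, β > 1, κ ∈ (0,1). Let Ξ assign to each (s,t,τ) ∈ Δ₃ an element Ξ^τ_{ts} ∈ E, and assume ‖δΞ‖_{(β,κ),1} < ∞. Then: (i) for every (s,t,τ) ∈ Δ₃ the Riemann sums Σ_{[u,v]∈P} Ξ^τ_{vu}, over partitions P of [s,t], converge as |P| → 0 to a limit I(Ξ^τ)_{ts}, and the limit is additive: I(Ξ^τ)_{ts} = I(Ξ^τ)_{tu} + I(Ξ^τ)_{us} for all s ≤ u ≤ t ≤ τ; (ii) there is a constant C, depending only on β and κ, such that ‖I(Ξ^τ)_{ts} − Ξ^τ_{ts}‖ ≤ C ‖δΞ‖_{(β,κ),1} · min((τ−t)^{−κ}(t−s)^{β}, (τ−s)^{β−κ}) for all (s,t,τ) ∈ Δ₃. -/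

import Mathlib

/-!
STATEMENT 7 (Lemma 4.2 (i)–(ii) of the paper): the Volterra sewing lemma.
The seminorm `‖δΞ‖_{(β,κ),1} < ∞` is encoded by a constant `A ≥ 0` bounding
`‖δ_m Ξ^τ_{ts}‖ ≤ A * min((τ-t)^(-κ)(t-s)^β, (τ-s)^(β-κ))`, where the minimum
(with the convention `0^(-c) = +∞`) is implemented by `mSing`.
The constant `C` in (ii) depends only on `β` and `κ`.
-/

/-- Partition of `[s,t]`: endpoints `π 0 = s < π 1 < ⋯ < π N = t`. -/
def IsPartition (s t : ℝ) (N : ℕ) (π : ℕ → ℝ) : Prop :=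
  π 0 = s ∧ π N = t ∧ ∀ i < N, π i < π (i + 1)

/-- Riemann sums along partitions of `[s,t]` converge to `I` as the mesh `→ 0`. -/
def RSLimit {E : Type*} [NormedAddCommGroup E] (s t : ℝ) (F : ℝ → ℝ → E) (I : E) : Prop :=
  ∀ ε > 0, ∃ δ > 0, ∀ (N : ℕ) (π : ℕ → ℝ), IsPartition s t N π →
    (∀ i < N, π (i + 1) - π i < δ) →
    ‖(∑ i ∈ Finset.range N, F (π i) (π (i + 1))) - I‖ < ε

/-- `min ((τ-t)^(-κ)(t-s)^β) ((τ-s)^(β-κ))` with the convention `0^(-c) = +∞`. -/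
noncomputable def mSing (τ t s κ β : ℝ) : ℝ :=
  if t < τ then min ((τ - t) ^ (-κ) * (t - s) ^ β) ((τ - s) ^ (β - κ))
  else (τ - s) ^ (β - κ)

open Finset Filter

section Analytic

lemma real_rpow_add_le {x y γ : ℝ} (hx : 0 ≤ x) (hy : 0 ≤ y) (h0 : 0 ≤ γ) (h1 : γ ≤ 1) :
    (x + y) ^ γ ≤ x ^ γ + y ^ γ := by
  have h := NNReal.rpow_add_le_add_rpow x.toNNReal y.toNNReal h0 h1
  have h2 := (NNReal.coe_le_coe).2 h
  push_cast [NNReal.coe_rpow, Real.coe_toNNReal _ hx, Real.coe_toNNReal _ hy] at h2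
  exact h2

lemma amgm {γ x : ℝ} (h0 : 0 ≤ γ) (h1 : γ ≤ 1) (hx : 0 ≤ x) : x ^ γ ≤ γ * x + (1 - γ) := by
  have := Real.geom_mean_le_arith_mean2_weighted h0 (by linarith : (0:ℝ) ≤ 1 - γ) hx
    (zero_le_one) (by ring)
  simpa using this

lemma rpow_sub_rpow_ge {γ a b : ℝ} (h0 : 0 ≤ γ) (h1 : γ ≤ 1) (ha : 0 ≤ a) (hab : a ≤ b)
    (hb : 0 < b) : γ * b ^ (γ - 1) * (b - a) ≤ b ^ γ - a ^ γ := by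
  have hx : (0:ℝ) ≤ a / b := div_nonneg ha hb.le
  have h := amgm h0 h1 hx
  have hbγ : (0:ℝ) < b ^ γ := Real.rpow_pos_of_pos hb _
  have hd : (a / b) ^ γ = a ^ γ / b ^ γ := Real.div_rpow ha hb.le _
  rw [hd] at h
  have hmul := mul_le_mul_of_nonneg_left h hbγ.le
  have he : b ^ γ * (a ^ γ / b ^ γ) = a ^ γ := by field_simp
  rw [he, mul_add] at hmul
  have h2 : b ^ γ * (γ * (a / b)) = γ * (b ^ (γ - 1) * a) := by
    rw [Real.rpow_sub hb, Real.rpow_one]; field_simp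
  rw [h2] at hmul
  have h3 : b ^ γ = b ^ (γ - 1) * b := by
    rw [Real.rpow_sub hb, Real.rpow_one]; field_simp
  nlinarith [Real.rpow_nonneg hb.le (γ - 1)]

lemma rpow_sub_rpow_le' {γ a b : ℝ} (h0 : 0 ≤ γ) (h1 : γ ≤ 1) (ha : 0 < a) (hab : a ≤ b) :
    b ^ γ - a ^ γ ≤ γ * a ^ (γ - 1) * (b - a) := by
  have hx : (0:ℝ) ≤ b / a := div_nonneg (by linarith) ha.le
  have h := amgm h0 h1 hx
  have haγ : (0:ℝ) < a ^ γ := Real.rpow_pos_of_pos ha _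
  have hd : (b / a) ^ γ = b ^ γ / a ^ γ := Real.div_rpow (by linarith) ha.le _
  rw [hd] at h
  have hmul := mul_le_mul_of_nonneg_left h haγ.le
  have he : a ^ γ * (b ^ γ / a ^ γ) = b ^ γ := by field_simp
  rw [he, mul_add] at hmul
  have h2 : a ^ γ * (γ * (b / a)) = γ * (a ^ (γ - 1) * b) := by
    rw [Real.rpow_sub ha, Real.rpow_one]; field_simp
  rw [h2] at hmul
  have h3 : a ^ γ = a ^ (γ - 1) * a := by
    rw [Real.rpow_sub ha, Real.rpow_one]; field_simp
  nlinarith [Real.rpow_nonneg ha.le (γ - 1)]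

lemma rpow_sub_rpow_le_sub {γ a b : ℝ} (h0 : 0 ≤ γ) (h1 : γ ≤ 1) (ha : 0 ≤ a) (hab : a ≤ b) :
    b ^ γ - a ^ γ ≤ (b - a) ^ γ := by
  have h := real_rpow_add_le (by linarith : (0:ℝ) ≤ b - a) ha h0 h1
  rw [sub_add_cancel] at h
  linarith

end Analytic

noncomputable def C0 (β κ : ℝ) : ℝ :=
  max ((2:ℝ) ^ κ / ((β - κ) / β) ^ β) ((1 - (2:ℝ) ^ (-((β - κ) / β))) ^ (-β))

section MS
variable {β κ : ℝ} (hβ : 1 < β) (hκ0 : 0 < κ) (hκ1 : κ < 1)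

lemma gamma_pos (hβ : 1 < β) (hκ1 : κ < 1) : 0 < (β - κ) / β :=
  div_pos (by linarith) (by linarith)
lemma gamma_lt_one (hβ : 1 < β) (hκ0 : 0 < κ) : (β - κ) / β < 1 := by
  rw [div_lt_one (by linarith : (0:ℝ) < β)]; linarith
lemma gamma_mul (hβ : 1 < β) : (β - κ) / β * β = β - κ := by field_simp
lemma gamma_sub_mul (hβ : 1 < β) : ((β - κ) / β - 1) * β = -κ := by field_simp; ring

include hβ hκ0 hκ1

lemma C0_pos : 0 < C0 β κ := by
  have h1 : (0:ℝ) < 2 ^ κ / ((β - κ) / β) ^ β :=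
    div_pos (Real.rpow_pos_of_pos two_pos _)
      (Real.rpow_pos_of_pos (gamma_pos hβ hκ1) _)
  exact lt_max_of_lt_left h1

/-- L1: domination of mSing by the control. -/
lemma mSing_le_control {u v τ : ℝ} (huv : u < v) (hvτ : v ≤ τ) :
    mSing τ v u κ β ≤ C0 β κ * ((τ - u) ^ ((β - κ) / β) - (τ - v) ^ ((β - κ) / β)) ^ β := by
  set γ := (β - κ) / β with hγ
  have hγ0 : 0 < γ := gamma_pos hβ hκ1
  have hγ1 : γ < 1 := gamma_lt_one hβ hκ0
  set a := τ - v with ha'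
  set b := τ - u with hb'
  have ha : 0 ≤ a := by rw [ha']; linarith
  have hb : 0 < b := by rw [hb']; linarith
  have hab : a < b := by rw [ha', hb']; linarith
  have hL : v - u = b - a := by rw [ha', hb']; ring
  set W := b ^ γ - a ^ γ with hW'
  have hWpos : 0 < W := by
    have := Real.rpow_lt_rpow ha hab hγ0
    rw [hW']; linarith
  have hWβ : 0 ≤ W ^ β := Real.rpow_nonneg hWpos.le _
  rcases le_or_gt b (2 * a) with hcase | hcase
  · -- b ≤ 2a : use singular bound
    have hapos : 0 < a := by linarith
    have hvτ' : v < τ := by rw [ha'] at hapos; linarith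
    have h1 : mSing τ v u κ β ≤ a ^ (-κ) * (v - u) ^ β := by
      rw [mSing, if_pos hvτ']; exact min_le_left _ _
    have hhalf : (0:ℝ) < b / 2 := by linarith
    have h2 : a ^ (-κ) ≤ (b / 2) ^ (-κ) :=
      Real.rpow_le_rpow_of_nonpos hhalf (by linarith) (by linarith)
    have h3 : (b / 2) ^ (-κ) = 2 ^ κ * b ^ (-κ) := by
      rw [Real.div_rpow hb.le (by norm_num), Real.rpow_neg (by norm_num : (0:ℝ) ≤ 2)]
      field_simp
    have hlow : γ * b ^ (γ - 1) * (b - a) ≤ W := rpow_sub_rpow_ge hγ0.le hγ1.le ha hab.le hb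
    have hXnn : 0 ≤ γ * b ^ (γ - 1) * (b - a) :=
      mul_nonneg (mul_nonneg hγ0.le (Real.rpow_nonneg hb.le _)) (by linarith)
    have hWβ_ge : (γ * b ^ (γ - 1) * (b - a)) ^ β ≤ W ^ β :=
      Real.rpow_le_rpow hXnn hlow (by linarith)
    have hexp : (b ^ (γ - 1)) ^ β = b ^ (-κ) := by
      rw [← Real.rpow_mul hb.le, hγ, gamma_sub_mul hβ]
    have hsplit : (γ * b ^ (γ - 1) * (b - a)) ^ β = γ ^ β * (b ^ (-κ) * (b - a) ^ β) := by
      rw [Real.mul_rpow (mul_nonneg hγ0.le (Real.rpow_nonneg hb.le _)) (by linarith),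
        Real.mul_rpow hγ0.le (Real.rpow_nonneg hb.le _), hexp]
      ring
    have hγβ : 0 < γ ^ β := Real.rpow_pos_of_pos hγ0 _
    have hkey : b ^ (-κ) * (b - a) ^ β ≤ W ^ β / γ ^ β := by
      rw [le_div_iff₀ hγβ]
      calc b ^ (-κ) * (b - a) ^ β * γ ^ β = (γ * b ^ (γ - 1) * (b - a)) ^ β := by
            rw [hsplit]; ring
        _ ≤ W ^ β := hWβ_ge
    have hC : 2 ^ κ / γ ^ β ≤ C0 β κ := by rw [C0, hγ]; exact le_max_left _ _
    calc mSing τ v u κ β ≤ a ^ (-κ) * (v - u) ^ β := h1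
      _ ≤ 2 ^ κ * b ^ (-κ) * (v - u) ^ β := by
          have h2κ : 0 ≤ (v - u) ^ β := Real.rpow_nonneg (by linarith) _
          rw [← h3]; exact mul_le_mul_of_nonneg_right h2 h2κ
      _ = 2 ^ κ * (b ^ (-κ) * (b - a) ^ β) := by rw [hL]; ring
      _ ≤ 2 ^ κ * (W ^ β / γ ^ β) :=
          mul_le_mul_of_nonneg_left hkey (Real.rpow_nonneg (by norm_num) _)
      _ = 2 ^ κ / γ ^ β * W ^ β := by ring
      _ ≤ C0 β κ * W ^ β := mul_le_mul_of_nonneg_right hC hWβ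
  · -- 2a < b : use regular bound
    have h1 : mSing τ v u κ β ≤ b ^ (β - κ) := by
      rw [mSing]
      split_ifs
      · exact min_le_right _ _
      · exact le_refl _
    set d := 1 - (2:ℝ) ^ (-γ) with hd'
    have hd0 : 0 < d := by
      have : (2:ℝ) ^ (-γ) < 1 := Real.rpow_lt_one_of_one_lt_of_neg one_lt_two (by linarith)
      rw [hd']; linarith
    have h2 : a ^ γ ≤ (b / 2) ^ γ := Real.rpow_le_rpow ha (by linarith) hγ0.le
    have h3 : (b / 2) ^ γ = b ^ γ * 2 ^ (-γ) := by
      rw [Real.div_rpow hb.le (by norm_num), Real.rpow_neg (by norm_num : (0:ℝ) ≤ 2)]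
      field_simp
    have hlow : b ^ γ * d ≤ W := by
      have h4 : a ^ γ ≤ b ^ γ * 2 ^ (-γ) := h3 ▸ h2
      rw [hW', hd']; nlinarith
    have hXnn : 0 ≤ b ^ γ * d := mul_nonneg (Real.rpow_nonneg hb.le _) hd0.le
    have hWβ_ge : (b ^ γ * d) ^ β ≤ W ^ β := Real.rpow_le_rpow hXnn hlow (by linarith)
    have hsplit : (b ^ γ * d) ^ β = b ^ (β - κ) * d ^ β := by
      rw [Real.mul_rpow (Real.rpow_nonneg hb.le _) hd0.le, ← Real.rpow_mul hb.le, hγ,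
        gamma_mul hβ]
    have hdβ : 0 < d ^ β := Real.rpow_pos_of_pos hd0 _
    have h4 : b ^ (β - κ) * d ^ β ≤ W ^ β := hsplit ▸ hWβ_ge
    have hkey : b ^ (β - κ) ≤ d ^ (-β) * W ^ β := by
      calc b ^ (β - κ) ≤ W ^ β / d ^ β := (le_div_iff₀ hdβ).2 h4
        _ = d ^ (-β) * W ^ β := by rw [Real.rpow_neg hd0.le]; field_simp
    have hC : d ^ (-β) ≤ C0 β κ := by rw [C0, hd', hγ]; exact le_max_right _ _
    calc mSing τ v u κ β ≤ b ^ (β - κ) := h1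
      _ ≤ d ^ (-β) * W ^ β := hkey
      _ ≤ C0 β κ * W ^ β := mul_le_mul_of_nonneg_right hC hWβ

/-- L2: the control is below mSing. -/
lemma control_le_mSing {s t τ : ℝ} (hst : s < t) (htτ : t ≤ τ) :
    ((τ - s) ^ ((β - κ) / β) - (τ - t) ^ ((β - κ) / β)) ^ β ≤ mSing τ t s κ β := by
  set γ := (β - κ) / β with hγ
  have hγ0 : 0 < γ := gamma_pos hβ hκ1
  have hγ1 : γ < 1 := gamma_lt_one hβ hκ0
  set a := τ - t with ha'
  set b := τ - s with hb'
  have ha : 0 ≤ a := by rw [ha']; linarith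
  have hb : 0 < b := by rw [hb']; linarith
  have hab : a < b := by rw [ha', hb']; linarith
  set W := b ^ γ - a ^ γ with hW'
  have hW0 : 0 ≤ W := by
    have := Real.rpow_le_rpow ha hab.le hγ0.le
    rw [hW']; linarith
  have hbound1 : W ^ β ≤ b ^ (β - κ) := by
    have hWb : W ≤ b ^ γ := by
      have : 0 ≤ a ^ γ := Real.rpow_nonneg ha _
      rw [hW']; linarith
    calc W ^ β ≤ (b ^ γ) ^ β := Real.rpow_le_rpow hW0 hWb (by linarith)
      _ = b ^ (β - κ) := by rw [← Real.rpow_mul hb.le, hγ, gamma_mul hβ]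
  rw [mSing]
  split_ifs with htτ'
  · refine le_min ?_ hbound1
    have hapos : 0 < a := by rw [ha']; linarith
    have hup : W ≤ γ * a ^ (γ - 1) * (b - a) := rpow_sub_rpow_le' hγ0.le hγ1.le hapos hab.le
    have haγ : 0 ≤ a ^ (γ - 1) := Real.rpow_nonneg ha _
    have hup2 : W ≤ a ^ (γ - 1) * (b - a) := by nlinarith
    have hL : t - s = b - a := by rw [ha', hb']; ring
    calc W ^ β ≤ (a ^ (γ - 1) * (b - a)) ^ β :=
          Real.rpow_le_rpow hW0 hup2 (by linarith)
      _ = a ^ (-κ) * (t - s) ^ β := by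
          rw [Real.mul_rpow haγ (by linarith), ← Real.rpow_mul ha, hγ, gamma_sub_mul hβ, hL]
  · exact hbound1

end MS

namespace IsPartition

variable {s t : ℝ} {N : ℕ} {π : ℕ → ℝ}

lemma lt (h : IsPartition s t N π) {i j : ℕ} (hij : i < j) (hj : j ≤ N) : π i < π j := by
  obtain ⟨-, -, hinc⟩ := h
  induction j, hij using Nat.le_induction with
  | base => exact hinc i (by omega)
  | succ n hn IH => exact lt_trans (IH (by omega)) (hinc n (by omega))

lemma mono (h : IsPartition s t N π) {i j : ℕ} (hij : i ≤ j) (hj : j ≤ N) : π i ≤ π j := by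
  rcases eq_or_lt_of_le hij with h' | h'
  · subst h'; exact le_refl _
  · exact (h.lt h' hj).le

lemma ge_left (h : IsPartition s t N π) {i : ℕ} (hi : i ≤ N) : s ≤ π i := by
  have := h.mono (Nat.zero_le i) hi; rwa [h.1] at this

lemma le_right (h : IsPartition s t N π) {i : ℕ} (hi : i ≤ N) : π i ≤ t := by
  have := h.mono hi (le_refl N); rwa [h.2.1] at this

end IsPartition

section Sewing

variable {E : Type*} [NormedAddCommGroup E]
variable (F : ℝ → ℝ → E) (f : ℝ → ℝ) (τ B β : ℝ)

/-- Lemma A : the maximal (Young) inequality along an arbitrary partition. -/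
theorem maximal (hf : Monotone f) (hβ : 1 < β) (hB : 0 ≤ B)
    (Hδ : ∀ u m v : ℝ, 0 ≤ u → u < m → m < v → v ≤ τ →
      ‖F u v - F u m - F m v‖ ≤ B * (f v - f u) ^ β) :
    ∀ N : ℕ, 1 ≤ N → ∀ s t : ℝ, ∀ π : ℕ → ℝ, 0 ≤ s → t ≤ τ → IsPartition s t N π →
    ‖(∑ i ∈ range N, F (π i) (π (i + 1))) - F s t‖
      ≤ B * (∑ n ∈ range (N - 1), (2 / ((n : ℝ) + 1)) ^ β) * (f t - f s) ^ β := by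
  intro N
  induction N using Nat.strong_induction_on with
  | _ N IH =>
    intro hN s t π hs htτ hπ
    have hst : s ≤ t := by
      have := hπ.mono (Nat.zero_le N) (le_refl N); rw [hπ.1, hπ.2.1] at this; exact this
    have hw0 : 0 ≤ f t - f s := sub_nonneg.2 (hf hst)
    have hwβ0 : 0 ≤ (f t - f s) ^ β := Real.rpow_nonneg hw0 _
    rcases eq_or_lt_of_le hN with h1 | h2
    · -- N = 1
      have hN1 : N = 1 := h1.symm
      subst hN1
      have : (∑ i ∈ range 1, F (π i) (π (i + 1))) = F s t := by
        rw [Finset.sum_range_one, hπ.1]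
        have h2 : π 1 = t := hπ.2.1
        rw [h2]
      rw [this, sub_self, norm_zero]
      have hsum0 : 0 ≤ ∑ n ∈ range (1 - 1), (2 / ((n : ℝ) + 1)) ^ β := by
        apply Finset.sum_nonneg; intro n _; exact Real.rpow_nonneg (by positivity) _
      positivity
    · -- 2 ≤ N
      set w := f t - f s with hwdef
      set c := 2 * w / ((N : ℝ) - 1) with hcdef
      have hNR : (1:ℝ) ≤ (N:ℝ) - 1 := by
        have : (2:ℝ) ≤ (N:ℝ) := by exact_mod_cast h2
        linarith
      have hc0 : 0 ≤ c := by
        rw [hcdef]; apply div_nonneg (by linarith) (by linarith)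
      -- telescoping
      have htel1 : ∑ j ∈ range (N - 1), (f (π (j + 1 + 1)) - f (π (j + 1))) =
          f (π N) - f (π 1) := by
        have := Finset.sum_range_sub (fun j => f (π (j + 1))) (N - 1)
        simpa [show N - 1 + 1 = N by omega] using this
      have htel2 : ∑ j ∈ range (N - 1), (f (π (j + 1)) - f (π j)) =
          f (π (N - 1)) - f (π 0) := by
        exact Finset.sum_range_sub (fun j => f (π j)) (N - 1)
      have htel : ∑ j ∈ range (N - 1), (f (π (j + 2)) - f (π j)) ≤ 2 * w := by
        have he : ∀ j, f (π (j + 2)) - f (π j)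
            = (f (π (j + 1 + 1)) - f (π (j + 1))) + (f (π (j + 1)) - f (π j)) := by
          intro j; ring_nf
        calc ∑ j ∈ range (N - 1), (f (π (j + 2)) - f (π j))
            = (∑ j ∈ range (N - 1), (f (π (j + 1 + 1)) - f (π (j + 1))))
              + ∑ j ∈ range (N - 1), (f (π (j + 1)) - f (π j)) := by
              rw [← Finset.sum_add_distrib]; exact Finset.sum_congr rfl fun j _ => he j
          _ = (f (π N) - f (π 1)) + (f (π (N - 1)) - f (π 0)) := by rw [htel1, htel2]
          _ ≤ 2 * w := by
              have h3 : f (π 0) ≤ f (π 1) := hf (hπ.mono (by omega) (by omega))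
              have h4 : f (π (N - 1)) ≤ f (π N) := hf (hπ.mono (by omega) (by omega))
              have h5 : π 0 = s := hπ.1
              have h6 : π N = t := hπ.2.1
              rw [hwdef]; rw [h5] at h3 ⊢; rw [h6] at h4 ⊢; linarith
      -- pigeonhole
      have hcard : (range (N - 1)).Nonempty := by
        rw [Finset.nonempty_range_iff]; omega
      have hpig : ∃ j ∈ range (N - 1), f (π (j + 2)) - f (π j) ≤ c := by
        apply Finset.exists_le_of_sum_le hcard
        have hconst : ∑ _j ∈ range (N - 1), c = ((N : ℝ) - 1) * c := by
          rw [Finset.sum_const, Finset.card_range, nsmul_eq_mul]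
          congr 1
          push_cast [show ((N - 1 : ℕ) : ℝ) = (N : ℝ) - 1 by push_cast [Nat.cast_sub (by omega : 1 ≤ N)]; ring]
          push_cast [Nat.cast_sub (by omega : 1 ≤ N)]
          ring
        rw [hconst, hcdef]
        have : ((N:ℝ) - 1) * (2 * w / ((N:ℝ) - 1)) = 2 * w := by
          field_simp
        rw [this]; exact htel
      obtain ⟨j, hjmem, hjle⟩ := hpig
      have hjN : j < N - 1 := Finset.mem_range.1 hjmem
      -- the reduced partition
      set π' : ℕ → ℝ := fun m => if m ≤ j then π m else π (m + 1) with hπ'def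
      have hπ'part : IsPartition s t (N - 1) π' := by
        refine ⟨?_, ?_, ?_⟩
        · simp only [hπ'def, if_pos (Nat.zero_le j)]; exact hπ.1
        · simp only [hπ'def, if_neg (by omega : ¬ (N - 1 ≤ j))]
          rw [show N - 1 + 1 = N by omega]; exact hπ.2.1
        · intro m hm
          by_cases h3 : m + 1 ≤ j
          · simp only [hπ'def, if_pos (by omega : m ≤ j), if_pos h3]
            exact hπ.2.2 m (by omega)
          · by_cases h4 : m ≤ j
            · simp only [hπ'def, if_pos h4, if_neg h3]
              have hm' : m = j := by omega
              subst hm'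
              exact lt_trans (hπ.2.2 m (by omega)) (hπ.2.2 (m + 1) (by omega))
            · simp only [hπ'def, if_neg h4, if_neg (by omega : ¬ (m + 1 ≤ j))]
              exact hπ.2.2 (m + 1) (by omega)
      -- sum identity
      set M := N - (j + 2) with hMdef
      have hsum : (∑ m ∈ range N, F (π m) (π (m + 1)))
          - (∑ m ∈ range (N - 1), F (π' m) (π' (m + 1)))
          = F (π j) (π (j + 1)) + F (π (j + 1)) (π (j + 2)) - F (π j) (π (j + 2)) := by
        have e1 : ∑ m ∈ range N, F (π m) (π (m + 1))
            = ((∑ m ∈ range j, F (π m) (π (m + 1))) + F (π j) (π (j + 1))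
              + F (π (j + 1)) (π (j + 2)))
              + ∑ m ∈ range M, F (π (j + 2 + m)) (π (j + 2 + m + 1)) := by
          rw [show N = (j + 2) + M by omega, Finset.sum_range_add,
            Finset.sum_range_succ, Finset.sum_range_succ]
        have e2 : ∑ m ∈ range (N - 1), F (π' m) (π' (m + 1))
            = ((∑ m ∈ range j, F (π m) (π (m + 1))) + F (π j) (π (j + 2)))
              + ∑ m ∈ range M, F (π (j + 2 + m)) (π (j + 2 + m + 1)) := by
          rw [show N - 1 = (j + 1) + M by omega, Finset.sum_range_add,
            Finset.sum_range_succ]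
          congr 1
          · congr 1
            · apply Finset.sum_congr rfl
              intro m hm
              have hm' : m < j := Finset.mem_range.1 hm
              simp only [hπ'def, if_pos (by omega : m ≤ j), if_pos (by omega : m + 1 ≤ j)]
            · simp only [hπ'def, if_pos (le_refl j), if_neg (by omega : ¬ (j + 1 ≤ j))]
          · apply Finset.sum_congr rfl
            intro m _
            simp only [hπ'def, if_neg (by omega : ¬ (j + 1 + m ≤ j)),
              if_neg (by omega : ¬ (j + 1 + m + 1 ≤ j))]
            congr 2 <;> omega
        rw [e1, e2]; abel
      -- cost of the removed point
      have hu0 : 0 ≤ π j := le_trans hs (hπ.ge_left (by omega))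
      have hu1 : π j < π (j + 1) := hπ.2.2 j (by omega)
      have hu2 : π (j + 1) < π (j + 2) := hπ.2.2 (j + 1) (by omega)
      have hu3 : π (j + 2) ≤ τ := le_trans (hπ.le_right (by omega)) htτ
      have hcost0 := Hδ (π j) (π (j + 1)) (π (j + 2)) hu0 hu1 hu2 hu3
      have hfj : 0 ≤ f (π (j + 2)) - f (π j) :=
        sub_nonneg.2 (hf (hπ.mono (by omega) (by omega)))
      have hcost : ‖F (π j) (π (j + 2)) - F (π j) (π (j + 1)) - F (π (j + 1)) (π (j + 2))‖
          ≤ B * ((2 / ((N : ℝ) - 1)) ^ β * w ^ β) := by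
        refine le_trans hcost0 ?_
        have h5 : (f (π (j + 2)) - f (π j)) ^ β ≤ c ^ β :=
          Real.rpow_le_rpow hfj hjle (by linarith)
        have h6 : c ^ β = (2 / ((N : ℝ) - 1)) ^ β * w ^ β := by
          rw [hcdef, show 2 * w / ((N:ℝ) - 1) = (2 / ((N:ℝ) - 1)) * w by ring,
            Real.mul_rpow (by positivity) hw0]
        rw [← h6]
        exact mul_le_mul_of_nonneg_left h5 hB
      -- apply IH
      have hIH := IH (N - 1) (by omega) (by omega) s t π' hs htτ hπ'part
      -- combine
      have hsplit : (∑ i ∈ range N, F (π i) (π (i + 1))) - F s t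
          = ((∑ m ∈ range N, F (π m) (π (m + 1)))
              - (∑ m ∈ range (N - 1), F (π' m) (π' (m + 1))))
            + ((∑ m ∈ range (N - 1), F (π' m) (π' (m + 1))) - F s t) := by abel
      have hnorm1 : ‖(∑ m ∈ range N, F (π m) (π (m + 1)))
          - (∑ m ∈ range (N - 1), F (π' m) (π' (m + 1)))‖
          ≤ B * ((2 / ((N : ℝ) - 1)) ^ β * w ^ β) := by
        rw [hsum]
        have : F (π j) (π (j + 1)) + F (π (j + 1)) (π (j + 2)) - F (π j) (π (j + 2))
            = -(F (π j) (π (j + 2)) - F (π j) (π (j + 1)) - F (π (j + 1)) (π (j + 2))) := by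
          abel
        rw [this, norm_neg]
        exact hcost
      have hfin : ‖(∑ i ∈ range N, F (π i) (π (i + 1))) - F s t‖
          ≤ B * ((2 / ((N : ℝ) - 1)) ^ β * w ^ β)
            + B * (∑ n ∈ range (N - 1 - 1), (2 / ((n : ℝ) + 1)) ^ β) * w ^ β := by
        rw [hsplit]
        exact le_trans (norm_add_le _ _) (add_le_add hnorm1 hIH)
      refine le_trans hfin (le_of_eq ?_)
      have hsum2 : ∑ n ∈ range (N - 1), (2 / ((n : ℝ) + 1)) ^ β
          = (∑ n ∈ range (N - 2), (2 / ((n : ℝ) + 1)) ^ β) + (2 / ((N : ℝ) - 1)) ^ β := by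
        rw [show N - 1 = (N - 2) + 1 by omega, Finset.sum_range_succ]
        congr 2
        push_cast [Nat.cast_sub (by omega : 2 ≤ N)]
        ring
      rw [hsum2, show N - 1 - 1 = N - 2 by omega]
      ring
end Sewing

section Sewing2

variable {E : Type*} [NormedAddCommGroup E]
variable (F : ℝ → ℝ → E) (f : ℝ → ℝ) (τ B β K : ℝ)

/-- Lemma B : comparison of a partition with a coarsening selected by `σ`. -/
theorem blocks (hf : Monotone f) (hβ : 1 < β) (hB : 0 ≤ B)
    (Hδ : ∀ u m v : ℝ, 0 ≤ u → u < m → m < v → v ≤ τ →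
      ‖F u v - F u m - F m v‖ ≤ B * (f v - f u) ^ β)
    (hK : ∀ n : ℕ, (∑ m ∈ range n, (2 / ((m : ℝ) + 1)) ^ β) ≤ K)
    {s t : ℝ} {M : ℕ} {ρ : ℕ → ℝ} (hs : 0 ≤ s) (htτ : t ≤ τ)
    (hρ : IsPartition s t M ρ) {Np : ℕ} (σ : ℕ → ℕ) (hσ0 : σ 0 = 0) (hσN : σ Np = M)
    (hσmono : ∀ l < Np, σ l < σ (l + 1)) :
    ‖(∑ i ∈ range M, F (ρ i) (ρ (i + 1))) - ∑ l ∈ range Np, F (ρ (σ l)) (ρ (σ (l + 1)))‖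
      ≤ ∑ l ∈ range Np, B * K * (f (ρ (σ (l + 1))) - f (ρ (σ l))) ^ β := by
  have hσle2 : ∀ l l', l ≤ l' → l' ≤ Np → σ l ≤ σ l' := by
    intro l l' hll' hl'
    rcases eq_or_lt_of_le hll' with h | h
    · subst h; exact le_refl _
    · clear hll'
      induction l', h using Nat.le_induction with
      | base => exact (hσmono l (by omega)).le
      | succ n hn IHn => exact le_trans (IHn (by omega)) (hσmono n (by omega)).le
  have hσle : ∀ l, l ≤ Np → σ l ≤ M := by
    intro l hl; have := hσle2 l Np hl (le_refl _); omega
  have hsplit : ∀ n, n ≤ Np → (∑ i ∈ range (σ n), F (ρ i) (ρ (i + 1)))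
      = ∑ l ∈ range n, ∑ i ∈ Ico (σ l) (σ (l + 1)), F (ρ i) (ρ (i + 1)) := by
    intro n
    induction n with
    | zero => intro _; simp [hσ0]
    | succ n IHn =>
      intro hn
      rw [Finset.sum_range_succ, ← IHn (by omega), Finset.range_eq_Ico, Finset.range_eq_Ico,
        Finset.sum_Ico_consecutive _ (Nat.zero_le _) (hσmono n (by omega)).le,
        ← Finset.range_eq_Ico]
  have hM : M = σ Np := hσN.symm
  rw [hM, hsplit Np (le_refl _), ← Finset.sum_sub_distrib]
  refine le_trans (norm_sum_le _ _) (Finset.sum_le_sum ?_)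
  intro l hl
  have hlNp : l < Np := Finset.mem_range.1 hl
  set Nl := σ (l + 1) - σ l with hNl
  have hNl1 : 1 ≤ Nl := by have := hσmono l hlNp; omega
  have hpart : IsPartition (ρ (σ l)) (ρ (σ (l + 1))) Nl (fun i => ρ (σ l + i)) := by
    refine ⟨by simp, ?_, ?_⟩
    · simp only []; congr 1; omega
    · intro i hi
      exact hρ.2.2 (σ l + i) (by have := hσle (l + 1) (by omega); omega)
  have hblock : ∑ i ∈ Ico (σ l) (σ (l + 1)), F (ρ i) (ρ (i + 1))
      = ∑ i ∈ range Nl, F (ρ (σ l + i)) (ρ (σ l + i + 1)) := by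
    rw [Finset.sum_Ico_eq_sum_range]
  have hs' : 0 ≤ ρ (σ l) := le_trans hs (hρ.ge_left (hσle l (by omega)))
  have ht' : ρ (σ (l + 1)) ≤ τ := le_trans (hρ.le_right (hσle (l + 1) (by omega))) htτ
  have hmax := maximal F f τ B β hf hβ hB Hδ Nl hNl1 (ρ (σ l)) (ρ (σ (l + 1)))
    (fun i => ρ (σ l + i)) hs' ht' hpart
  rw [hblock]
  refine le_trans hmax ?_
  have hwnn : 0 ≤ (f (ρ (σ (l + 1))) - f (ρ (σ l))) ^ β :=
    Real.rpow_nonneg (sub_nonneg.2 (hf (hρ.mono (hσle2 l (l+1) (by omega) (by omega))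
      (hσle (l + 1) (by omega))))) _
  exact mul_le_mul_of_nonneg_right (mul_le_mul_of_nonneg_left (hK _) hB) hwnn

/-- selection of indices of a sub-partition inside a refinement. -/
lemma exists_selection {s t : ℝ} {M N : ℕ} {ρ π : ℕ → ℝ}
    (hρ : IsPartition s t M ρ) (hπ : IsPartition s t N π)
    (hsub : ∀ l ≤ N, ∃ m ≤ M, ρ m = π l) :
    ∃ σ : ℕ → ℕ, σ 0 = 0 ∧ σ N = M ∧ (∀ l < N, σ l < σ (l + 1)) ∧
      ∀ l ≤ N, ρ (σ l) = π l := by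
  have hch : ∀ l, ∃ m, l ≤ N → (m ≤ M ∧ ρ m = π l) := by
    intro l
    by_cases hl : l ≤ N
    · obtain ⟨m, hm, he⟩ := hsub l hl; exact ⟨m, fun _ => ⟨hm, he⟩⟩
    · exact ⟨0, fun h => absurd h hl⟩
  choose σ hσ using hch
  have heq : ∀ l ≤ N, ρ (σ l) = π l := fun l hl => (hσ l hl).2
  have hle : ∀ l ≤ N, σ l ≤ M := fun l hl => (hσ l hl).1
  have hmono : ∀ l < N, σ l < σ (l + 1) := by
    intro l hl
    by_contra hcon
    push_neg at hcon
    have h1 : ρ (σ (l + 1)) ≤ ρ (σ l) := hρ.mono hcon (hle l (by omega))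
    rw [heq l (by omega), heq (l + 1) (by omega)] at h1
    exact absurd (hπ.lt (by omega : l < l + 1) (by omega)) (not_lt.2 h1)
  have h0 : σ 0 = 0 := by
    by_contra hcon
    have h1 : ρ 0 < ρ (σ 0) := hρ.lt (by omega) (hle 0 (by omega))
    rw [heq 0 (by omega), hπ.1, hρ.1] at h1
    exact lt_irrefl _ h1
  have hN : σ N = M := by
    rcases eq_or_lt_of_le (hle N (le_refl _)) with h | h
    · exact h
    · exfalso
      have h1 : ρ (σ N) < ρ M := hρ.lt h (le_refl _)
      rw [heq N (by omega), hπ.2.1, hρ.2.1] at h1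
      exact lt_irrefl _ h1
  exact ⟨σ, h0, hN, hmono, heq⟩

/-- common refinement of two partitions. -/
lemma exists_refinement {s t : ℝ} {N₁ N₂ : ℕ} {π₁ π₂ : ℕ → ℝ}
    (h1 : IsPartition s t N₁ π₁) (h2 : IsPartition s t N₂ π₂) (hN₁ : 1 ≤ N₁) :
    ∃ (M : ℕ) (ρ : ℕ → ℝ), IsPartition s t M ρ ∧
      (∀ l ≤ N₁, ∃ m ≤ M, ρ m = π₁ l) ∧ (∀ l ≤ N₂, ∃ m ≤ M, ρ m = π₂ l) := by
  classical
  set A : Finset ℝ := ((range (N₁ + 1)).image π₁) ∪ ((range (N₂ + 1)).image π₂) with hA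
  have hsA : s ∈ A := by
    rw [hA]
    apply Finset.mem_union_left
    exact Finset.mem_image.2 ⟨0, Finset.mem_range.2 (by omega), h1.1⟩
  have htA : t ∈ A := by
    rw [hA]
    apply Finset.mem_union_left
    exact Finset.mem_image.2 ⟨N₁, Finset.mem_range.2 (by omega), h1.2.1⟩
  have hbounds : ∀ x ∈ A, s ≤ x ∧ x ≤ t := by
    intro x hx
    rw [hA, Finset.mem_union] at hx
    rcases hx with hx | hx <;> obtain ⟨i, hi, he⟩ := Finset.mem_image.1 hx <;>
      rw [Finset.mem_range] at hi <;> subst he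
    · exact ⟨h1.ge_left (by omega), h1.le_right (by omega)⟩
    · exact ⟨h2.ge_left (by omega), h2.le_right (by omega)⟩
  set k := A.card with hk
  have hk1 : 1 ≤ k := Finset.card_pos.2 ⟨s, hsA⟩
  set e := A.orderIsoOfFin (rfl : A.card = k) with he
  set M := k - 1 with hM
  set ρ : ℕ → ℝ := fun m => if h : m < k then (e ⟨m, h⟩ : ℝ) else t with hρ
  have hρval : ∀ m (h : m < k), ρ m = (e ⟨m, h⟩ : ℝ) := by
    intro m h; rw [hρ]; exact dif_pos h
  have hmem : ∀ x ∈ A, ∃ m ≤ M, ρ m = x := by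
    intro x hx
    refine ⟨(e.symm ⟨x, hx⟩ : Fin k).val, by omega, ?_⟩
    rw [hρval _ (e.symm ⟨x, hx⟩).isLt]
    simp
  have hρmono : ∀ m m', m < m' → m' ≤ M → ρ m < ρ m' := by
    intro m m' hmm' hm'
    have hmk : m < k := by omega
    have hm'k : m' < k := by omega
    rw [hρval m hmk, hρval m' hm'k]
    have : (⟨m, hmk⟩ : Fin k) < ⟨m', hm'k⟩ := by
      rw [Fin.mk_lt_mk]; exact hmm'
    exact e.strictMono this
  have hρ0 : ρ 0 = s := by
    rw [hρval 0 (by omega)]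
    apply le_antisymm
    · obtain ⟨m, hm, hme⟩ := hmem s hsA
      rcases Nat.eq_zero_or_pos m with h | h
      · subst h; rw [hρval 0 (by omega)] at hme; rw [hme]
      · have := hρmono 0 m h hm
        rw [hρval 0 (by omega)] at this
        rw [← hme] at *
        exact le_of_lt this
    · exact (hbounds _ (e ⟨0, by omega⟩).2).1
  have hρM : ρ M = t := by
    rw [hρval M (by omega)]
    apply le_antisymm
    · exact (hbounds _ (e ⟨M, by omega⟩).2).2
    · obtain ⟨m, hm, hme⟩ := hmem t htA
      rcases eq_or_lt_of_le hm with h | h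
      · subst h; rw [hρval M (by omega)] at hme; rw [hme]
      · have := hρmono m M h (le_refl _)
        rw [hρval M (by omega)] at this
        rw [← hme] at *
        exact le_of_lt this
  have hpart : IsPartition s t M ρ := ⟨hρ0, hρM, fun i hi => hρmono i (i + 1) (by omega) (by omega)⟩
  refine ⟨M, ρ, hpart, ?_, ?_⟩
  · intro l hl
    apply hmem
    rw [hA]
    apply Finset.mem_union_left
    exact Finset.mem_image.2 ⟨l, Finset.mem_range.2 (by omega), rfl⟩
  · intro l hl
    apply hmem
    rw [hA]
    apply Finset.mem_union_right
    exact Finset.mem_image.2 ⟨l, Finset.mem_range.2 (by omega), rfl⟩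

/-- Lemma C : comparison of the Riemann sums of two arbitrary partitions. -/
theorem compare (hf : Monotone f) (hβ : 1 < β) (hB : 0 ≤ B)
    (Hδ : ∀ u m v : ℝ, 0 ≤ u → u < m → m < v → v ≤ τ →
      ‖F u v - F u m - F m v‖ ≤ B * (f v - f u) ^ β)
    (hK : ∀ n : ℕ, (∑ m ∈ range n, (2 / ((m : ℝ) + 1)) ^ β) ≤ K)
    {s t : ℝ} {N₁ N₂ : ℕ} {π₁ π₂ : ℕ → ℝ} (hs : 0 ≤ s) (htτ : t ≤ τ)
    (h1 : IsPartition s t N₁ π₁) (h2 : IsPartition s t N₂ π₂) (hN₁ : 1 ≤ N₁) :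
    ‖(∑ i ∈ range N₁, F (π₁ i) (π₁ (i + 1))) - ∑ i ∈ range N₂, F (π₂ i) (π₂ (i + 1))‖
      ≤ (∑ l ∈ range N₁, B * K * (f (π₁ (l + 1)) - f (π₁ l)) ^ β)
        + ∑ l ∈ range N₂, B * K * (f (π₂ (l + 1)) - f (π₂ l)) ^ β := by
  obtain ⟨M, ρ, hρ, hsub1, hsub2⟩ := exists_refinement h1 h2 hN₁
  obtain ⟨σ₁, hσ₁0, hσ₁N, hσ₁mono, hσ₁eq⟩ := exists_selection hρ h1 hsub1
  obtain ⟨σ₂, hσ₂0, hσ₂N, hσ₂mono, hσ₂eq⟩ := exists_selection hρ h2 hsub2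
  have hb1 := blocks F f τ B β K hf hβ hB Hδ hK hs htτ hρ σ₁ hσ₁0 hσ₁N hσ₁mono
  have hb2 := blocks F f τ B β K hf hβ hB Hδ hK hs htτ hρ σ₂ hσ₂0 hσ₂N hσ₂mono
  have he1 : ∀ l ∈ range N₁, F (ρ (σ₁ l)) (ρ (σ₁ (l + 1))) = F (π₁ l) (π₁ (l + 1)) := by
    intro l hl
    have hl' := Finset.mem_range.1 hl
    rw [hσ₁eq l (by omega), hσ₁eq (l + 1) (by omega)]
  have he2 : ∀ l ∈ range N₂, F (ρ (σ₂ l)) (ρ (σ₂ (l + 1))) = F (π₂ l) (π₂ (l + 1)) := by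
    intro l hl
    have hl' := Finset.mem_range.1 hl
    rw [hσ₂eq l (by omega), hσ₂eq (l + 1) (by omega)]
  rw [Finset.sum_congr rfl he1] at hb1
  rw [Finset.sum_congr rfl he2] at hb2
  have hw1 : ∀ l ∈ range N₁,
      B * K * (f (ρ (σ₁ (l + 1))) - f (ρ (σ₁ l))) ^ β
        = B * K * (f (π₁ (l + 1)) - f (π₁ l)) ^ β := by
    intro l hl
    have hl' := Finset.mem_range.1 hl
    rw [hσ₁eq l (by omega), hσ₁eq (l + 1) (by omega)]
  have hw2 : ∀ l ∈ range N₂,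
      B * K * (f (ρ (σ₂ (l + 1))) - f (ρ (σ₂ l))) ^ β
        = B * K * (f (π₂ (l + 1)) - f (π₂ l)) ^ β := by
    intro l hl
    have hl' := Finset.mem_range.1 hl
    rw [hσ₂eq l (by omega), hσ₂eq (l + 1) (by omega)]
  rw [Finset.sum_congr rfl hw1] at hb1
  rw [Finset.sum_congr rfl hw2] at hb2
  calc ‖(∑ i ∈ range N₁, F (π₁ i) (π₁ (i + 1))) - ∑ i ∈ range N₂, F (π₂ i) (π₂ (i + 1))‖
      ≤ ‖(∑ i ∈ range M, F (ρ i) (ρ (i + 1))) - ∑ i ∈ range N₁, F (π₁ i) (π₁ (i + 1))‖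
        + ‖(∑ i ∈ range M, F (ρ i) (ρ (i + 1))) - ∑ i ∈ range N₂, F (π₂ i) (π₂ (i + 1))‖ := by
        rw [show (∑ i ∈ range N₁, F (π₁ i) (π₁ (i + 1)))
            - ∑ i ∈ range N₂, F (π₂ i) (π₂ (i + 1))
          = -(((∑ i ∈ range M, F (ρ i) (ρ (i + 1))) - ∑ i ∈ range N₁, F (π₁ i) (π₁ (i + 1)))
            - ((∑ i ∈ range M, F (ρ i) (ρ (i + 1)))
              - ∑ i ∈ range N₂, F (π₂ i) (π₂ (i + 1)))) by abel]
        rw [norm_neg]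
        exact norm_sub_le _ _
    _ ≤ _ := add_le_add hb1 hb2

end Sewing2

section Glue

lemma IsPartition.one_le {s t : ℝ} {N : ℕ} {π : ℕ → ℝ} (h : IsPartition s t N π)
    (hst : s < t) : 1 ≤ N := by
  by_contra h0
  push_neg at h0
  interval_cases N
  have h1 := h.1
  have h2 := h.2.1
  rw [h1] at h2
  exact absurd h2 (ne_of_lt hst)

variable (f : ℝ → ℝ) (β : ℝ)

lemma sum_wβ_le (hf : Monotone f) (hβ : 1 < β) {s t q : ℝ} {N : ℕ} {π : ℕ → ℝ}
    (hπ : IsPartition s t N π) (hq : 0 ≤ q) (hmesh : ∀ i < N, f (π (i + 1)) - f (π i) ≤ q) :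
    ∑ l ∈ Finset.range N, (f (π (l + 1)) - f (π l)) ^ β ≤ q ^ (β - 1) * (f t - f s) := by
  have htel : ∑ l ∈ Finset.range N, (f (π (l + 1)) - f (π l)) = f t - f s := by
    rw [Finset.sum_range_sub (fun l => f (π l)) N, hπ.1, hπ.2.1]
  have hterm : ∀ l ∈ Finset.range N, (f (π (l + 1)) - f (π l)) ^ β
      ≤ q ^ (β - 1) * (f (π (l + 1)) - f (π l)) := by
    intro l hl
    have hlN := Finset.mem_range.1 hl
    have hw0 : 0 ≤ f (π (l + 1)) - f (π l) :=
      sub_nonneg.2 (hf (hπ.mono (by omega) (by omega)))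
    rcases eq_or_lt_of_le hw0 with h | h
    · rw [← h, Real.zero_rpow (by linarith), mul_zero]
    · have he : (f (π (l + 1)) - f (π l)) ^ β
          = (f (π (l + 1)) - f (π l)) ^ (β - 1) * (f (π (l + 1)) - f (π l)) := by
        have h2 := Real.rpow_add_one (ne_of_gt h) (β - 1)
        rw [sub_add_cancel] at h2
        exact h2
      rw [he]
      apply mul_le_mul_of_nonneg_right _ hw0
      exact Real.rpow_le_rpow hw0 (hmesh l hlN) (by linarith)
  calc ∑ l ∈ Finset.range N, (f (π (l + 1)) - f (π l)) ^ β
      ≤ ∑ l ∈ Finset.range N, q ^ (β - 1) * (f (π (l + 1)) - f (π l)) :=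
        Finset.sum_le_sum hterm
    _ = q ^ (β - 1) * (f t - f s) := by rw [← Finset.mul_sum, htel]

lemma young_summable (hβ : 1 < β) : Summable (fun n : ℕ => (2 / ((n : ℝ) + 1)) ^ β) := by
  have h1 : Summable (fun n : ℕ => 1 / ((n : ℝ)) ^ β) := Real.summable_one_div_nat_rpow.2 hβ
  have h2 : Summable (fun n : ℕ => 1 / ((n : ℝ) + 1) ^ β) := by
    have := (summable_nat_add_iff 1).2 h1
    apply this.congr
    intro n
    push_cast
    ring_nf
  have h3 := h2.mul_left ((2:ℝ) ^ β)
  apply h3.congr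
  intro n
  rw [Real.div_rpow (by norm_num) (by positivity)]
  field_simp

end Glue

noncomputable def unifPt (s t : ℝ) (n i : ℕ) : ℝ := s + (i : ℝ) * ((t - s) / ((n : ℝ) + 1))

noncomputable def Sunif {E : Type*} [NormedAddCommGroup E] (Ξ : ℝ → ℝ → ℝ → E) (τ s t : ℝ)
    (n : ℕ) : E :=
  ∑ i ∈ Finset.range (n + 1), Ξ τ (unifPt s t n (i + 1)) (unifPt s t n i)

noncomputable def Ifun {E : Type*} [NormedAddCommGroup E] (Ξ : ℝ → ℝ → ℝ → E) (τ t s : ℝ) : E :=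
  haveI : Nonempty E := ⟨0⟩
  if s < t then limUnder Filter.atTop (Sunif Ξ τ s t) else 0

lemma unifPt_zero (s t : ℝ) (n : ℕ) : unifPt s t n 0 = s := by simp [unifPt]

lemma unifPt_last (s t : ℝ) (n : ℕ) : unifPt s t n (n + 1) = t := by
  rw [unifPt]
  push_cast
  field_simp
  ring

lemma unifPt_incr (s t : ℝ) (n i : ℕ) :
    unifPt s t n (i + 1) - unifPt s t n i = (t - s) / ((n : ℝ) + 1) := by
  rw [unifPt, unifPt]
  push_cast
  ring

lemma unifPart {s t : ℝ} (hst : s < t) (n : ℕ) : IsPartition s t (n + 1) (unifPt s t n) := by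
  refine ⟨unifPt_zero s t n, unifPt_last s t n, ?_⟩
  intro i _
  have h := unifPt_incr s t n i
  have hts : (0:ℝ) < t - s := sub_pos.2 hst
  have h2 : 0 < (t - s) / ((n : ℝ) + 1) := by positivity
  linarith [h, h2]

lemma mesh_tendsto (c : ℝ) : Filter.Tendsto (fun n : ℕ => c / ((n : ℝ) + 1))
    Filter.atTop (nhds 0) := by
  have h := (tendsto_const_div_atTop_nhds_zero_nat c).comp (Filter.tendsto_add_atTop_nat 1)
  apply h.congr
  intro n
  simp only [Function.comp_apply]
  push_cast
  ring

open Filter in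
theorem master {E : Type*} [NormedAddCommGroup E] [NormedSpace ℝ E] [CompleteSpace E]
    {β κ : ℝ} (hβ : 1 < β) (hκ0 : 0 < κ) (hκ1 : κ < 1)
    (Ξ : ℝ → ℝ → ℝ → E) (A : ℝ) (hA : 0 ≤ A) (Ksum : ℝ)
    (hKsum : ∀ n : ℕ, (∑ m ∈ Finset.range n, (2 / ((m : ℝ) + 1)) ^ β) ≤ Ksum)
    (hK0 : 0 ≤ Ksum) (τ : ℝ)
    (Hb : ∀ s m t : ℝ, 0 ≤ s → s < m → m < t → t ≤ τ →
      ‖Ξ τ t s - Ξ τ t m - Ξ τ m s‖ ≤ A * mSing τ t s κ β)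
    {s t : ℝ} (hs : 0 ≤ s) (hst : s < t) (htτ : t ≤ τ) :
    Tendsto (fun n => Sunif Ξ τ s t n) atTop (nhds (Ifun Ξ τ t s)) ∧
    RSLimit s t (fun u v => Ξ τ v u) (Ifun Ξ τ t s) ∧
    ‖Ifun Ξ τ t s - Ξ τ t s‖ ≤ A * (C0 β κ * Ksum) * mSing τ t s κ β := by
  have hγ0 : 0 < (β - κ) / β := gamma_pos hβ hκ1
  have hγ1 : (β - κ) / β < 1 := gamma_lt_one hβ hκ0
  set γ := (β - κ) / β with hγdef
  set f : ℝ → ℝ := fun x => -(max (τ - x) 0) ^ γ with hfdef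
  have hf : Monotone f := by
    intro x y hxy
    simp only [hfdef, neg_le_neg_iff]
    exact Real.rpow_le_rpow (le_max_right _ _) (max_le_max (by linarith) (le_refl 0)) hγ0.le
  have hfval : ∀ x, x ≤ τ → f x = -(τ - x) ^ γ := by
    intro x hx
    simp only [hfdef]
    rw [max_eq_left (by linarith)]
  have hfw : ∀ u v : ℝ, u ≤ v → v ≤ τ → f v - f u = (τ - u) ^ γ - (τ - v) ^ γ := by
    intro u v huv hv
    rw [hfval u (by linarith), hfval v hv]
    ring
  set F : ℝ → ℝ → E := fun u v => Ξ τ v u with hFdef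
  set B := A * C0 β κ with hBdef
  have hB : 0 ≤ B := mul_nonneg hA (C0_pos hβ hκ0 hκ1).le
  have Hδ : ∀ u m v : ℝ, 0 ≤ u → u < m → m < v → v ≤ τ →
      ‖F u v - F u m - F m v‖ ≤ B * (f v - f u) ^ β := by
    intro u m v hu hum hmv hvτ
    have h1 := Hb u m v hu hum hmv hvτ
    have h2 : F u v - F u m - F m v = Ξ τ v u - Ξ τ v m - Ξ τ m u := by
      simp only [hFdef]; abel
    rw [h2]
    refine le_trans h1 ?_
    have h3 := mSing_le_control hβ hκ0 hκ1 (lt_trans hum hmv) hvτ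
    rw [hfw u v (by linarith) hvτ, ← hγdef] at *
    calc A * mSing τ v u κ β ≤ A * (C0 β κ * ((τ - u) ^ γ - (τ - v) ^ γ) ^ β) :=
          mul_le_mul_of_nonneg_left h3 hA
      _ = B * ((τ - u) ^ γ - (τ - v) ^ γ) ^ β := by rw [hBdef]; ring
  set W := f t - f s with hWdef
  have hW0 : 0 ≤ W := sub_nonneg.2 (hf hst.le)
  have hWβ0 : 0 ≤ W ^ β := Real.rpow_nonneg hW0 _
  have hts : (0:ℝ) < t - s := sub_pos.2 hst
  have hup : ∀ n : ℕ, IsPartition s t (n + 1) (unifPt s t n) := unifPart hst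
  -- Σ w^β bound for partitions with mesh ≤ q
  have hsumβ : ∀ {N : ℕ} {π : ℕ → ℝ} {q : ℝ}, IsPartition s t N π → 0 ≤ q →
      (∀ i < N, π (i + 1) - π i ≤ q) →
      ∑ l ∈ Finset.range N, (f (π (l + 1)) - f (π l)) ^ β ≤ (q ^ γ) ^ (β - 1) * W := by
    intro N π q hπ hq hmesh
    have h := sum_wβ_le f β hf hβ hπ (Real.rpow_nonneg hq γ) ?_
    · exact h
    · intro i hi
      have hπτ : π (i + 1) ≤ τ := le_trans (hπ.le_right (by omega)) htτ
      have hπmono : π i ≤ π (i + 1) := hπ.mono (by omega) (by omega)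
      have ha : (0:ℝ) ≤ τ - π (i + 1) := by linarith
      have hab : τ - π (i + 1) ≤ τ - π i := by linarith
      have h1 := rpow_sub_rpow_le_sub hγ0.le hγ1.le ha hab
      rw [show τ - π i - (τ - π (i + 1)) = π (i + 1) - π i by ring] at h1
      rw [hfw (π i) (π (i + 1)) hπmono hπτ]
      exact le_trans h1 (Real.rpow_le_rpow (by linarith) (hmesh i hi) hγ0.le)
  -- comparison of arbitrary partitions
  have hcmp : ∀ {N₁ N₂ : ℕ} {π₁ π₂ : ℕ → ℝ} {q₁ q₂ : ℝ}, IsPartition s t N₁ π₁ →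
      IsPartition s t N₂ π₂ → 0 ≤ q₁ → 0 ≤ q₂ →
      (∀ i < N₁, π₁ (i + 1) - π₁ i ≤ q₁) → (∀ i < N₂, π₂ (i + 1) - π₂ i ≤ q₂) →
      ‖(∑ i ∈ Finset.range N₁, F (π₁ i) (π₁ (i + 1)))
          - ∑ i ∈ Finset.range N₂, F (π₂ i) (π₂ (i + 1))‖
        ≤ B * Ksum * ((q₁ ^ γ) ^ (β - 1) * W) + B * Ksum * ((q₂ ^ γ) ^ (β - 1) * W) := by
    intro N₁ N₂ π₁ π₂ q₁ q₂ hπ₁ hπ₂ hq₁ hq₂ hm₁ hm₂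
    have hN₁ : 1 ≤ N₁ := hπ₁.one_le hst
    have h := compare F f τ B β Ksum hf hβ hB Hδ hKsum hs htτ hπ₁ hπ₂ hN₁
    refine le_trans h (add_le_add ?_ ?_)
    · rw [← Finset.mul_sum]
      exact mul_le_mul_of_nonneg_left (hsumβ hπ₁ hq₁ hm₁) (mul_nonneg hB hK0)
    · rw [← Finset.mul_sum]
      exact mul_le_mul_of_nonneg_left (hsumβ hπ₂ hq₂ hm₂) (mul_nonneg hB hK0)
  -- mesh and modulus sequences
  set msh : ℕ → ℝ := fun n => (t - s) / ((n : ℝ) + 1) with hmshdef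
  have hmsh0 : ∀ n, 0 < msh n := by
    intro n; rw [hmshdef]; positivity
  have hmshmono : ∀ N n : ℕ, N ≤ n → msh n ≤ msh N := by
    intro N n hNn
    rw [hmshdef]
    apply div_le_div_of_nonneg_left hts.le (by positivity)
    have : (N:ℝ) ≤ (n:ℝ) := Nat.cast_le.2 hNn
    linarith
  set eps : ℕ → ℝ := fun n => ((msh n) ^ γ) ^ (β - 1) with hepsdef
  have heps0 : ∀ n, 0 ≤ eps n := by
    intro n; rw [hepsdef]
    exact Real.rpow_nonneg (Real.rpow_nonneg (hmsh0 n).le _) _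
  have hepsmono : ∀ N n : ℕ, N ≤ n → eps n ≤ eps N := by
    intro N n hNn
    simp only [hepsdef]
    exact Real.rpow_le_rpow (Real.rpow_nonneg (hmsh0 n).le _)
      (Real.rpow_le_rpow (hmsh0 n).le (hmshmono N n hNn) hγ0.le) (by linarith)
  have hepstend : Tendsto eps atTop (nhds 0) := by
    have t1 : Tendsto msh atTop (nhds 0) := mesh_tendsto (t - s)
    have t2 : Tendsto (fun x : ℝ => x ^ γ) (nhds 0) (nhds 0) := by
      have h := (Real.continuousAt_rpow_const 0 γ (Or.inr hγ0.le)).tendsto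
      rwa [Real.zero_rpow hγ0.ne'] at h
    have t3 : Tendsto (fun x : ℝ => x ^ (β - 1)) (nhds 0) (nhds 0) := by
      have h := (Real.continuousAt_rpow_const 0 (β - 1) (Or.inr (by linarith))).tendsto
      rwa [Real.zero_rpow (by linarith : β - 1 ≠ 0)] at h
    exact (t3.comp t2).comp t1
  have hBK0 : 0 ≤ B * Ksum := mul_nonneg hB hK0
  have htermtend : Tendsto (fun n => B * Ksum * (eps n * W) + B * Ksum * (eps n * W))
      atTop (nhds 0) := by
    have h := hepstend.const_mul (2 * (B * Ksum) * W)
    rw [mul_zero] at h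
    apply h.congr
    intro n; ring
  -- uniform Riemann sums and their Cauchy property
  have hSdef : ∀ n, Sunif Ξ τ s t n
      = ∑ i ∈ Finset.range (n + 1), F (unifPt s t n i) (unifPt s t n (i + 1)) := by
    intro n; rfl
  have humeshle : ∀ n : ℕ, ∀ i, unifPt s t n (i + 1) - unifPt s t n i ≤ msh n := by
    intro n i; rw [unifPt_incr]
  have hcauchy : CauchySeq (fun n => Sunif Ξ τ s t n) := by
    apply cauchySeq_of_le_tendsto_0 (fun N => B * Ksum * (eps N * W) + B * Ksum * (eps N * W))
      _ htermtend
    intro n m N hNn hNm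
    rw [dist_eq_norm, hSdef n, hSdef m]
    have h := hcmp (hup n) (hup m) (hmsh0 n).le (hmsh0 m).le
      (fun i _ => humeshle n i) (fun i _ => humeshle m i)
    refine le_trans h (add_le_add ?_ ?_)
    · exact mul_le_mul_of_nonneg_left
        (mul_le_mul_of_nonneg_right (hepsmono N n hNn) hW0) hBK0
    · exact mul_le_mul_of_nonneg_left
        (mul_le_mul_of_nonneg_right (hepsmono N m hNm) hW0) hBK0
  obtain ⟨L, hL⟩ := cauchySeq_tendsto_of_complete hcauchy
  have hIeq : Ifun Ξ τ t s = L := by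
    rw [Ifun, if_pos hst]
    exact hL.limUnder_eq
  have hLI : Tendsto (fun n => Sunif Ξ τ s t n) atTop (nhds (Ifun Ξ τ t s)) := by
    rw [hIeq]; exact hL
  -- the maximal estimate for uniform sums
  have hest1 : ∀ n, ‖Sunif Ξ τ s t n - F s t‖ ≤ B * Ksum * W ^ β := by
    intro n
    have h := maximal F f τ B β hf hβ hB Hδ (n + 1) (by omega) s t (unifPt s t n)
      hs htτ (hup n)
    rw [← hSdef n] at h
    refine le_trans h ?_
    have h2 : (∑ n' ∈ Finset.range (n + 1 - 1), (2 / ((n' : ℝ) + 1)) ^ β) ≤ Ksum := hKsum _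
    exact mul_le_mul_of_nonneg_right (mul_le_mul_of_nonneg_left h2 hB) hWβ0
  -- (i) RSLimit
  have hRS : RSLimit s t (fun u v => Ξ τ v u) (Ifun Ξ τ t s) := by
    intro ε hε
    have h1 : Tendsto (fun n => ‖Sunif Ξ τ s t n - Ifun Ξ τ t s‖) atTop (nhds 0) :=
      tendsto_iff_norm_sub_tendsto_zero.1 hLI
    have h2 : ∀ᶠ n in atTop, ‖Sunif Ξ τ s t n - Ifun Ξ τ t s‖ < ε / 3 :=
      h1.eventually_lt_const (by linarith)
    have h3 : ∀ᶠ n in atTop, B * Ksum * (eps n * W) < ε / 3 := by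
      have h := hepstend.const_mul (B * Ksum * W)
      rw [mul_zero] at h
      have h' : Tendsto (fun n => B * Ksum * (eps n * W)) atTop (nhds 0) := by
        apply h.congr; intro n; ring
      exact h'.eventually_lt_const (by linarith)
    obtain ⟨n, hn2x, hn3x⟩ := (h2.and h3).exists
    have hn2 : ‖Sunif Ξ τ s t n - Ifun Ξ τ t s‖ < ε / 3 := hn2x
    have hn3 : B * Ksum * (eps n * W) < ε / 3 := hn3x
    refine ⟨msh n, hmsh0 n, ?_⟩
    intro N π hπ hmesh
    have hN1 : 1 ≤ N := hπ.one_le hst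
    have hc := hcmp hπ (hup n) (hmsh0 n).le (hmsh0 n).le
      (fun i hi => (hmesh i hi).le) (fun i _ => humeshle n i)
    have htri : ‖(∑ i ∈ Finset.range N, Ξ τ (π (i + 1)) (π i)) - Ifun Ξ τ t s‖
        ≤ ‖(∑ i ∈ Finset.range N, F (π i) (π (i + 1)))
            - ∑ i ∈ Finset.range (n + 1), F (unifPt s t n i) (unifPt s t n (i + 1))‖
          + ‖Sunif Ξ τ s t n - Ifun Ξ τ t s‖ := by
      rw [hSdef n]
      have he : (∑ i ∈ Finset.range N, Ξ τ (π (i + 1)) (π i))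
          = ∑ i ∈ Finset.range N, F (π i) (π (i + 1)) := rfl
      rw [he]
      exact norm_sub_le_norm_sub_add_norm_sub _ _ _
    have hn3' : B * Ksum * ((msh n ^ γ) ^ (β - 1) * W) < ε / 3 := by
      have hq1 : (msh n ^ γ) ^ (β - 1) * W = eps n * W := by rw [hepsdef]
      rw [hq1]; exact hn3
    have hlt : B * Ksum * ((msh n ^ γ) ^ (β - 1) * W)
        + B * Ksum * ((msh n ^ γ) ^ (β - 1) * W)
        + ‖Sunif Ξ τ s t n - Ifun Ξ τ t s‖ < ε := by
      have h9 := add_lt_add (add_lt_add hn3' hn3') hn2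
      refine lt_of_lt_of_eq h9 ?_
      ring
    exact lt_of_le_of_lt (le_trans htri (add_le_add_left hc _)) hlt
  refine ⟨hLI, hRS, ?_⟩
  -- (ii) local estimate
  have hest2 : ‖Ifun Ξ τ t s - Ξ τ t s‖ ≤ B * Ksum * W ^ β := by
    rw [hIeq]
    have h1 : Tendsto (fun n => ‖Sunif Ξ τ s t n - Ξ τ t s‖) atTop
        (nhds ‖L - Ξ τ t s‖) := (hL.sub_const _).norm
    exact le_of_tendsto h1 (Filter.Eventually.of_forall hest1)
  have hWval : W = (τ - s) ^ γ - (τ - t) ^ γ := by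
    rw [hWdef]; exact hfw s t hst.le htτ
  have h2 := control_le_mSing hβ hκ0 hκ1 hst htτ
  rw [← hγdef] at h2
  have h3 : W ^ β ≤ mSing τ t s κ β := by rw [hWval]; exact h2
  refine le_trans hest2 ?_
  calc B * Ksum * W ^ β ≤ B * Ksum * mSing τ t s κ β :=
        mul_le_mul_of_nonneg_left h3 hBK0
    _ = A * (C0 β κ * Ksum) * mSing τ t s κ β := by rw [hBdef]; ring


lemma mSing_nonneg' {τ t s κ β : ℝ} (hst : s ≤ t) (htτ : t ≤ τ) : 0 ≤ mSing τ t s κ β := by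
  have h1 : (0:ℝ) ≤ τ - s := by linarith
  have h2 : (0:ℝ) ≤ t - s := by linarith
  have h3 : (0:ℝ) ≤ τ - t := by linarith
  rw [mSing]
  split_ifs
  · exact le_min (mul_nonneg (Real.rpow_nonneg h3 _) (Real.rpow_nonneg h2 _))
      (Real.rpow_nonneg h1 _)
  · exact Real.rpow_nonneg h1 _


theorem statement7.{u} (β κ : ℝ) (hβ : 1 < β) (hκ0 : 0 < κ) (hκ1 : κ < 1) :
    ∃ C : ℝ, 0 < C ∧
      ∀ (E : Type u) [NormedAddCommGroup E] [NormedSpace ℝ E] [CompleteSpace E],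
      ∀ (T : ℝ), 0 < T →
      ∀ (Ξ : ℝ → ℝ → ℝ → E) (A : ℝ), 0 ≤ A →
      (∀ s m t τ : ℝ, 0 ≤ s → s < m → m < t → t ≤ τ → τ ≤ T →
          ‖Ξ τ t s - Ξ τ t m - Ξ τ m s‖ ≤ A * mSing τ t s κ β) →
      ∃ I : ℝ → ℝ → ℝ → E,
        (∀ s t τ : ℝ, 0 ≤ s → s ≤ t → t ≤ τ → τ ≤ T →
            RSLimit s t (fun u v => Ξ τ v u) (I τ t s)) ∧
        (∀ s u t τ : ℝ, 0 ≤ s → s ≤ u → u ≤ t → t ≤ τ → τ ≤ T →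
            I τ t s = I τ t u + I τ u s) ∧
        (∀ s t τ : ℝ, 0 ≤ s → s < t → t ≤ τ → τ ≤ T →
            ‖I τ t s - Ξ τ t s‖ ≤ C * A * mSing τ t s κ β) := by
  classical
  set Ksum := ∑' n : ℕ, (2 / ((n : ℝ) + 1)) ^ β with hKs
  have hsumm := young_summable β hβ
  have hKsum : ∀ n : ℕ, (∑ m ∈ Finset.range n, (2 / ((m : ℝ) + 1)) ^ β) ≤ Ksum := by
    intro n
    exact Summable.sum_le_tsum (Finset.range n)
      (fun i _ => Real.rpow_nonneg (by positivity) _) hsumm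
  have hK0 : 0 ≤ Ksum := tsum_nonneg (fun i => Real.rpow_nonneg (by positivity) _)
  have hC0 := C0_pos hβ hκ0 hκ1
  refine ⟨C0 β κ * Ksum + 1, by nlinarith, ?_⟩
  intro E _ _ _ T hT Ξ A hA Hb
  have Hb' : ∀ τ : ℝ, τ ≤ T → ∀ a b c : ℝ, 0 ≤ a → a < b → b < c → c ≤ τ →
      ‖Ξ τ c a - Ξ τ c b - Ξ τ b a‖ ≤ A * mSing τ c a κ β :=
    fun τ hτT a b c h1 h2 h3 h4 => Hb a b c τ h1 h2 h3 h4 hτT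
  have hIzero : ∀ τ x : ℝ, Ifun Ξ τ x x = 0 := by
    intro τ x; rw [Ifun, if_neg (lt_irrefl x)]
  refine ⟨fun τ t s => Ifun Ξ τ t s, ?_, ?_, ?_⟩
  · -- (i) RSLimit
    intro s t τ hs hst htτ hτT
    rcases eq_or_lt_of_le hst with heq | hlt
    · subst heq
      intro ε hε
      refine ⟨1, one_pos, ?_⟩
      intro N π hπ _
      have hN0 : N = 0 := by
        by_contra hN
        have h := hπ.lt (show (0:ℕ) < N by omega) (le_refl N)
        rw [hπ.1, hπ.2.1] at h
        exact lt_irrefl _ h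
      subst hN0
      simp only [Finset.sum_range_zero, hIzero, sub_zero, norm_zero]
      exact hε
    · exact (master hβ hκ0 hκ1 Ξ A hA Ksum hKsum hK0 τ (Hb' τ hτT) hs hlt htτ).2.1
  · -- (ii) additivity
    intro s u t τ hs hsu hut htτ hτT
    rcases eq_or_lt_of_le hsu with he1 | h1
    · subst he1
      simp only [hIzero, add_zero]
    · rcases eq_or_lt_of_le hut with he2 | h2
      · subst he2
        simp only [hIzero, zero_add]
      · have hu0 : 0 ≤ u := le_trans hs hsu
        have huτ : u ≤ τ := le_trans hut htτ
        have hst : s < t := lt_trans h1 h2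
        have hm_st := master hβ hκ0 hκ1 Ξ A hA Ksum hKsum hK0 τ (Hb' τ hτT) hs hst htτ
        have hm_su := master hβ hκ0 hκ1 Ξ A hA Ksum hKsum hK0 τ (Hb' τ hτT) hs h1 huτ
        have hm_ut := master hβ hκ0 hκ1 Ξ A hA Ksum hKsum hK0 τ (Hb' τ hτT) hu0 h2 htτ
        set Q : ℕ → ℕ → ℝ :=
          fun n i => if i ≤ n + 1 then unifPt s u n i else unifPt u t n (i - (n + 1))
          with hQdef
        have hQ2 : ∀ n i, n + 1 ≤ i → Q n i = unifPt u t n (i - (n + 1)) := by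
          intro n i hi
          rcases eq_or_lt_of_le hi with he | hlt'
          · rw [hQdef]
            simp only [← he, if_pos (le_refl (n + 1)), Nat.sub_self]
            rw [unifPt_last, unifPt_zero]
          · rw [hQdef]
            simp only [if_neg (by omega : ¬ (i ≤ n + 1))]
        have hQ1 : ∀ n i, i ≤ n + 1 → Q n i = unifPt s u n i := by
          intro n i hi
          rw [hQdef]; simp only [if_pos hi]
        have hQpart : ∀ n, IsPartition s t (2 * (n + 1)) (Q n) := by
          intro n
          refine ⟨?_, ?_, ?_⟩
          · rw [hQ1 n 0 (by omega), unifPt_zero]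
          · rw [hQ2 n (2 * (n + 1)) (by omega), show 2 * (n + 1) - (n + 1) = n + 1 by omega,
              unifPt_last]
          · intro i hi
            by_cases hc : i + 1 ≤ n + 1
            · rw [hQ1 n i (by omega), hQ1 n (i + 1) hc]
              exact (unifPart h1 n).2.2 i (by omega)
            · rw [hQ2 n (i + 1) (by omega), hQ2 n i (by omega),
                show i + 1 - (n + 1) = (i - (n + 1)) + 1 by omega]
              exact (unifPart h2 n).2.2 (i - (n + 1)) (by omega)
        have hQsum : ∀ n, (∑ i ∈ Finset.range (2 * (n + 1)), Ξ τ (Q n (i + 1)) (Q n i))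
            = Sunif Ξ τ s u n + Sunif Ξ τ u t n := by
          intro n
          rw [two_mul, Finset.sum_range_add]
          congr 1
          · apply Finset.sum_congr rfl
            intro i hi
            have hi' : i < n + 1 := Finset.mem_range.1 hi
            rw [hQ1 n i (by omega), hQ1 n (i + 1) (by omega)]
          · apply Finset.sum_congr rfl
            intro i hi
            have hi' : i < n + 1 := Finset.mem_range.1 hi
            rw [hQ2 n (n + 1 + i) (by omega), hQ2 n (n + 1 + i + 1) (by omega),
              show n + 1 + i - (n + 1) = i by omega,
              show n + 1 + i + 1 - (n + 1) = i + 1 by omega]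
        have hT1 : Tendsto (fun n => ∑ i ∈ Finset.range (2 * (n + 1)),
            Ξ τ (Q n (i + 1)) (Q n i)) atTop (nhds (Ifun Ξ τ t s)) := by
          rw [NormedAddCommGroup.tendsto_atTop]
          intro ε hε
          obtain ⟨δ, hδ, hconv⟩ := hm_st.2.1 ε hε
          obtain ⟨n₀, hn₀⟩ := Filter.eventually_atTop.1
            ((mesh_tendsto (t - s)).eventually_lt_const hδ)
          refine ⟨n₀, fun n hn => ?_⟩
          refine hconv (2 * (n + 1)) (Q n) (hQpart n) ?_
          intro i hi
          have hnp : (0:ℝ) < (n : ℝ) + 1 := by positivity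
          have hkey : (t - s) / ((n : ℝ) + 1) < δ := hn₀ n hn
          by_cases hc : i + 1 ≤ n + 1
          · rw [hQ1 n i (by omega), hQ1 n (i + 1) hc, unifPt_incr]
            have : (u - s) / ((n : ℝ) + 1) ≤ (t - s) / ((n : ℝ) + 1) := by
              gcongr
            linarith
          · rw [hQ2 n (i + 1) (by omega), hQ2 n i (by omega),
              show i + 1 - (n + 1) = (i - (n + 1)) + 1 by omega, unifPt_incr]
            have : (t - u) / ((n : ℝ) + 1) ≤ (t - s) / ((n : ℝ) + 1) := by
              gcongr
            linarith
        have hT2 : Tendsto (fun n => ∑ i ∈ Finset.range (2 * (n + 1)),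
            Ξ τ (Q n (i + 1)) (Q n i)) atTop (nhds (Ifun Ξ τ u s + Ifun Ξ τ t u)) := by
          have h := hm_su.1.add hm_ut.1
          apply h.congr
          intro n
          exact (hQsum n).symm
        have heq := tendsto_nhds_unique hT1 hT2
        show Ifun Ξ τ t s = Ifun Ξ τ t u + Ifun Ξ τ u s
        rw [heq, add_comm]
  · -- (iii) the bound
    intro s t τ hs hst htτ hτT
    have hm := (master hβ hκ0 hκ1 Ξ A hA Ksum hKsum hK0 τ (Hb' τ hτT) hs hst htτ).2.2
    refine le_trans hm ?_
    have hms := mSing_nonneg' (τ := τ) (t := t) (s := s) (κ := κ) (β := β) hst.le htτ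
    nlinarith [mul_nonneg hA hms]
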